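/- arXiv:1712.01622 — 5 statements merged into one kernel-verified Lean document; each statement's English description precedes it below -/
import Mathlib

section
/- In a quasi-median graph, for every hyperplane J, the graph obtained from X by removing the interiors of the edges of J is disconnected. -/
/-- Triangle condition. -/
def TriangleCondition {V : Type*} (X : SimpleGraph V) : Prop :=
  ∀ u v w : V, X.Adj v w → X.dist u v = X.dist u w →
    ∃ x : V, X.Adj v x ∧ X.Adj w x ∧ X.dist u x + 1 = X.dist u v

/-- Quadrangle condition. -/
def QuadrangleCondition {V : Type*} (X : SimpleGraph V) : Prop :=
  ∀ u z v w : V, X.Adj v z → X.Adj w z → v ≠ w →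
    X.dist u v = X.dist u w → X.dist u z = X.dist u v + 1 →
    ∃ x : V, X.Adj v x ∧ X.Adj w x ∧ X.dist u x + 1 = X.dist u v

/-- A graph is weakly modular if it satisfies the triangle and quadrangle conditions. -/
def WeaklyModular {V : Type*} (X : SimpleGraph V) : Prop :=
  TriangleCondition X ∧ QuadrangleCondition X

/-- `K₄⁻`: the complete graph on four vertices minus the edge `{2,3}`. -/
def K4minus : SimpleGraph (Fin 4) :=
  SimpleGraph.fromRel (fun a b => ¬((a = 2 ∧ b = 3) ∨ (a = 3 ∧ b = 2)))

/-- A graph is quasi-median if it is connected, weakly modular, and contains no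
induced `K₄⁻` and no induced `K_{3,2}`. -/
def QuasiMedian {V : Type*} (X : SimpleGraph V) : Prop :=
  X.Connected ∧ WeaklyModular X ∧
    IsEmpty (K4minus ↪g X) ∧ IsEmpty (completeBipartiteGraph (Fin 3) (Fin 2) ↪g X)

/-- Two edges of `X` are elementarily related if they are two sides of a triangle
or opposite sides of a square. -/
def EdgeRel {V : Type*} (X : SimpleGraph V) (e e' : Sym2 V) : Prop :=
  e ∈ X.edgeSet ∧ e' ∈ X.edgeSet ∧
    ((∃ a b c : V, e = s(a, b) ∧ e' = s(a, c) ∧ X.Adj a b ∧ X.Adj a c ∧ X.Adj b c) ∨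
     (∃ a b c d : V, e = s(a, b) ∧ e' = s(c, d) ∧ X.Adj a b ∧ X.Adj c d ∧
        X.Adj a c ∧ X.Adj b d ∧ a ≠ d ∧ b ≠ c))

/-- A hyperplane of `X`: the equivalence class, under the transitive closure of the
square/triangle relation, of some edge of `X`. -/
def IsHyperplane {V : Type*} (X : SimpleGraph V) (J : Set (Sym2 V)) : Prop :=
  ∃ e ∈ X.edgeSet, J = {e' | e' ∈ X.edgeSet ∧ Relation.EqvGen (EdgeRel X) e e'}

/-- A hyperplane `J` separates `u` from `v` if every walk from `u` to `v` uses an edge of `J`. -/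
def Separates {V : Type*} (X : SimpleGraph V) (J : Set (Sym2 V)) (u v : V) : Prop :=
  ∀ p : X.Walk u v, ∃ e ∈ p.edges, e ∈ J

open Classical in
/-- The number of times the walk `p` crosses the hyperplane `J`. -/
noncomputable def crossCount {V : Type*} {X : SimpleGraph V} {u v : V}
    (p : X.Walk u v) (J : Set (Sym2 V)) : ℕ :=
  (p.edges.filter (fun e => e ∈ J)).length

/-! Fix an edge `xy ∈ J` and call `v` good (`HasGeodesicAvoiding X J x v`) if some geodesic of
`X` from `x` to `v` avoids `J`. Goodness spreads along every edge `uv ∉ J`, by induction on the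
distance to `x`. Going up, extend the geodesic. Going sideways, the triangle condition gives a common
neighbour `w` of `u` and `v` one level lower; going down, the quadrangle condition gives a common
neighbour `w`, one level below `v`, of `v` and of the predecessor `u'` of `u` on the geodesic. The
triangle `uvw`, resp. the square `uu'wv`, relates the edges at `w` to edges avoiding `J`, so they
avoid `J` too, and `w` (hence `v`) is good by induction. If `X ∖ J` were connected then `y` would be
good, but the only geodesic from `x` to `y` is the edge `xy ∈ J`. -/

open SimpleGraph

namespace IsHyperplane

variable {V : Type*} {X : SimpleGraph V} {J : Set (Sym2 V)}

theorem exists_adj_mem (hJ : IsHyperplane X J) : ∃ x y, X.Adj x y ∧ s(x, y) ∈ J := by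
  obtain ⟨e, he, rfl⟩ := hJ
  induction e using Sym2.ind with
  | _ x y => exact ⟨x, y, he, he, Relation.EqvGen.refl _⟩

theorem mem_iff_of_edgeRel (hJ : IsHyperplane X J) {e e' : Sym2 V} (h : EdgeRel X e e') :
    e ∈ J ↔ e' ∈ J := by
  obtain ⟨e₀, -, rfl⟩ := hJ
  exact ⟨fun he => ⟨h.2.1, he.2.trans _ _ _ (.rel _ _ h)⟩,
    fun he' => ⟨h.1, he'.2.trans _ _ _ (.symm _ _ (.rel _ _ h))⟩⟩

theorem deleteEdges_adj_of_triangle (hJ : IsHyperplane X J) {a b c : V}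
    (hab : (X.deleteEdges J).Adj a b) (hac : X.Adj a c) (hbc : X.Adj b c) :
    (X.deleteEdges J).Adj a c := by
  rw [deleteEdges_adj] at hab ⊢
  have hrel : EdgeRel X s(a, b) s(a, c) := ⟨hab.1, hac, .inl ⟨a, b, c, rfl, rfl, hab.1, hac, hbc⟩⟩
  exact ⟨hac, mt (hJ.mem_iff_of_edgeRel hrel).2 hab.2⟩

theorem deleteEdges_adj_of_square (hJ : IsHyperplane X J) {a b c d : V}
    (hab : (X.deleteEdges J).Adj a b) (hcd : X.Adj c d) (hac : X.Adj a c) (hbd : X.Adj b d)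
    (had : a ≠ d) (hbc : b ≠ c) :
    (X.deleteEdges J).Adj c d := by
  rw [deleteEdges_adj] at hab ⊢
  have hrel : EdgeRel X s(a, b) s(c, d) :=
    ⟨hab.1, hcd, .inr ⟨a, b, c, d, rfl, rfl, hab.1, hcd, hac, hbd, had, hbc⟩⟩
  exact ⟨hcd, mt (hJ.mem_iff_of_edgeRel hrel).2 hab.2⟩

end IsHyperplane

def HasGeodesicAvoiding {V : Type*} (X : SimpleGraph V) (J : Set (Sym2 V)) (x v : V) : Prop :=
  ∃ p : (X.deleteEdges J).Walk x v, p.length = X.dist x v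

namespace HasGeodesicAvoiding

variable {V : Type*} {X : SimpleGraph V} {J : Set (Sym2 V)} {x u v : V}

theorem refl (x : V) : HasGeodesicAvoiding X J x x :=
  ⟨.nil, X.dist_self.symm⟩

theorem reachable (h : HasGeodesicAvoiding X J x u) : X.Reachable x u :=
  h.elim fun p _ => ⟨p.mapLe (X.deleteEdges_le J)⟩

theorem concat (h : HasGeodesicAvoiding X J x u) (huv : (X.deleteEdges J).Adj u v)
    (hd : X.dist x v = X.dist x u + 1) : HasGeodesicAvoiding X J x v := by
  obtain ⟨p, hp⟩ := h
  exact ⟨p.concat huv, by rw [Walk.length_concat, hp, hd]⟩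

theorem exists_adj_of_dist_eq_succ {n : ℕ} (h : HasGeodesicAvoiding X J x u)
    (hd : X.dist x u = n + 1) :
    ∃ u', HasGeodesicAvoiding X J x u' ∧ (X.deleteEdges J).Adj u' u ∧ X.dist x u' = n := by
  obtain ⟨p, hp⟩ := h
  have hne : ¬p.Nil := by rw [Walk.not_nil_iff_lt_length]; omega
  have hlen : p.dropLast.length = n := by rw [Walk.length_dropLast]; omega
  have hle : X.dist x p.penultimate ≤ n := by
    simpa [hlen] using X.dist_le (p.dropLast.mapLe (X.deleteEdges_le J))
  have hadj := p.adj_penultimate hne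
  have hdist : X.dist x p.penultimate = n := by
    rcases (deleteEdges_adj.1 hadj).1.diff_dist_adj (u := x) with h | h | h <;> omega
  exact ⟨_, ⟨p.dropLast, hlen.trans hdist.symm⟩, hadj, hdist⟩

theorem of_dist_eq_zero (h : X.Reachable x v) (hv : X.dist x v = 0) :
    HasGeodesicAvoiding X J x v := by
  obtain rfl := h.dist_eq_zero_iff.1 hv
  exact refl x

theorem of_adj_of_dist_eq_succ (hX : QuadrangleCondition X) (hJ : IsHyperplane X J) :
    ∀ {n : ℕ} {u v : V}, HasGeodesicAvoiding X J x u → (X.deleteEdges J).Adj u v →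
      X.dist x v = n → X.dist x u = n + 1 → HasGeodesicAvoiding X J x v
  | 0, _, _, hu, huv, hv, _ =>
    of_dist_eq_zero (hu.reachable.trans (X.deleteEdges_le J huv).reachable) hv
  | m + 1, u, v, hu, huv, hv, hu_d => by
    obtain ⟨u', hu', hu'u, hu'_d⟩ := hu.exists_adj_of_dist_eq_succ hu_d
    obtain rfl | hu'v := eq_or_ne u' v
    · exact hu'
    obtain ⟨w, hu'w, hvw, hw⟩ := hX x u u' v (X.deleteEdges_le J hu'u)
      (X.deleteEdges_le J huv.symm) hu'v (by omega) (by omega)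
    have huw : u ≠ w := by rintro rfl; omega
    have hu'w' := hJ.deleteEdges_adj_of_square huv hu'w (X.deleteEdges_le J hu'u).symm hvw huw
      (Ne.symm hu'v)
    have hvw' := hJ.deleteEdges_adj_of_square hu'u.symm hvw (X.deleteEdges_le J huv) hu'w huw hu'v
    exact (of_adj_of_dist_eq_succ hX hJ hu' hu'w' (by omega) hu'_d).concat hvw'.symm (by omega)

theorem of_adj_of_dist_eq (hX : WeaklyModular X) (hJ : IsHyperplane X J)
    (hu : HasGeodesicAvoiding X J x u) (huv : (X.deleteEdges J).Adj u v)
    (hd : X.dist x v = X.dist x u) : HasGeodesicAvoiding X J x v := by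
  obtain ⟨w, huw, hvw, hw⟩ := hX.1 x u v (X.deleteEdges_le J huv) hd.symm
  have huw' := hJ.deleteEdges_adj_of_triangle huv huw hvw
  have hvw' := hJ.deleteEdges_adj_of_triangle huv.symm hvw huw
  exact (of_adj_of_dist_eq_succ hX.2 hJ hu huw' rfl hw.symm).concat hvw'.symm (by omega)

theorem of_adj (hX : WeaklyModular X) (hJ : IsHyperplane X J)
    (hu : HasGeodesicAvoiding X J x u) (huv : (X.deleteEdges J).Adj u v) :
    HasGeodesicAvoiding X J x v := by
  rcases (X.deleteEdges_le J huv).symm.diff_dist_adj (u := x) with h | h | h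
  · exact hu.of_adj_of_dist_eq hX hJ huv h.symm
  · exact of_adj_of_dist_eq_succ hX.2 hJ hu huv rfl h
  · obtain h0 | h0 := Nat.eq_zero_or_pos (X.dist x v)
    · exact hu.of_adj_of_dist_eq hX hJ huv (by omega)
    · exact hu.concat huv (by omega)

theorem of_walk (hX : WeaklyModular X) (hJ : IsHyperplane X J)
    (hu : HasGeodesicAvoiding X J x u) (p : (X.deleteEdges J).Walk u v) :
    HasGeodesicAvoiding X J x v := by
  induction p with
  | nil => exact hu
  | cons h _ ih => exact ih (hu.of_adj hX hJ h)

end HasGeodesicAvoiding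

/-- In a quasi-median graph, removing the (interiors of the) edges of any hyperplane
disconnects the graph. -/
theorem deleteHyperplane_disconnected {V : Type*} (X : SimpleGraph V) (hX : QuasiMedian X) :
    ∀ J : Set (Sym2 V), IsHyperplane X J → ¬ (X.deleteEdges J).Connected := by
  intro J hJ hconn
  obtain ⟨x, y, hxy, hxyJ⟩ := hJ.exists_adj_mem
  obtain ⟨p⟩ := hconn.preconnected x y
  obtain ⟨q, hq⟩ := (HasGeodesicAvoiding.refl x).of_walk hX.2.1 hJ p
  rw [dist_eq_one_iff_adj.2 hxy] at hq
  exact (deleteEdges_adj.1 (q.adj_of_length_eq_one hq)).2 hxyJ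
end

section
/- In a graph product ΓG of nontrivial groups, for two vertices u, v of Γ: the subgroups G_u and G_v commute elementwise if and only if u = v with G_u abelian, or (u,v) is an edge of Γ. -/
/-- The commutation relators of a graph product: commutators of elements of vertex groups
joined by an edge of `Γ`. -/
def graphProductRels {ι : Type*} (Γ : SimpleGraph ι) (G : ι → Type*) [∀ i, Group (G i)] :
    Set (Monoid.CoprodI G) :=
  {x | ∃ (i j : ι) (g : G i) (h : G j), Γ.Adj i j ∧
    x = Monoid.CoprodI.of g * Monoid.CoprodI.of h *
          (Monoid.CoprodI.of g)⁻¹ * (Monoid.CoprodI.of h)⁻¹}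

/-- The graph product of the groups `G i` over the simplicial graph `Γ`: the quotient of
their free product by the normal closure of the commutation relators. -/
def GraphProduct {ι : Type*} (Γ : SimpleGraph ι) (G : ι → Type*) [∀ i, Group (G i)] :
    Type _ :=
  Monoid.CoprodI G ⧸ Subgroup.normalClosure (graphProductRels Γ G)

instance {ι : Type*} (Γ : SimpleGraph ι) (G : ι → Type*) [∀ i, Group (G i)] :
    Group (GraphProduct Γ G) :=
  inferInstanceAs (Group (Monoid.CoprodI G ⧸ Subgroup.normalClosure (graphProductRels Γ G)))

/-- The canonical morphism from a vertex group into the graph product. -/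
def GraphProduct.of {ι : Type*} {Γ : SimpleGraph ι} {G : ι → Type*} [∀ i, Group (G i)]
    {i : ι} : G i →* GraphProduct Γ G :=
  (QuotientGroup.mk' (Subgroup.normalClosure (graphProductRels Γ G))).comp Monoid.CoprodI.of

/-- In a free product, elements of distinct factors never commute (when nontrivial). -/
theorem coprodI_not_commute {ι : Type*} {G : ι → Type*} [∀ i, Group (G i)]
    {i j : ι} (hij : i ≠ j) {g : G i} {h : G j} (hg : g ≠ 1) (hh : h ≠ 1) :
    Monoid.CoprodI.of g * Monoid.CoprodI.of h ≠
      Monoid.CoprodI.of h * Monoid.CoprodI.of g := by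
  classical
  intro heq
  have hje : (Monoid.CoprodI.Word.empty : Monoid.CoprodI.Word G).fstIdx ≠ some j := by
    simp [Monoid.CoprodI.Word.fstIdx, Monoid.CoprodI.Word.empty]
  have hie : (Monoid.CoprodI.Word.empty : Monoid.CoprodI.Word G).fstIdx ≠ some i := by
    simp [Monoid.CoprodI.Word.fstIdx, Monoid.CoprodI.Word.empty]
  let wh : Monoid.CoprodI.Word G := Monoid.CoprodI.Word.cons h .empty hje hh
  let wg : Monoid.CoprodI.Word G := Monoid.CoprodI.Word.cons g .empty hie hg
  have hwh : wh.fstIdx ≠ some i := by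
    simp only [wh, Monoid.CoprodI.Word.fstIdx_cons]
    exact fun hc => hij (Option.some_injective _ hc).symm
  have hwg : wg.fstIdx ≠ some j := by
    simp only [wg, Monoid.CoprodI.Word.fstIdx_cons]
    exact fun hc => hij (Option.some_injective _ hc)
  let w1 : Monoid.CoprodI.Word G := Monoid.CoprodI.Word.cons g wh hwh hg
  let w2 : Monoid.CoprodI.Word G := Monoid.CoprodI.Word.cons h wg hwg hh
  have hprod : w1.prod = w2.prod := by
    simp only [w1, w2, wh, wg, Monoid.CoprodI.Word.prod_cons,
      Monoid.CoprodI.Word.prod_empty, mul_one]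
    exact heq
  have : w1 = w2 :=
    (Monoid.CoprodI.Word.equiv (M := G)).symm.injective hprod
  have hlist : w1.toList = w2.toList := by rw [this]
  simp only [w1, w2, Monoid.CoprodI.Word.cons, List.cons.injEq] at hlist
  exact hij (congrArg Sigma.fst hlist.1)

/-- Lifting a family of homomorphisms satisfying the commutation relations to the
graph product. -/
def GraphProduct.lift {ι : Type*} {Γ : SimpleGraph ι} {G : ι → Type*} [∀ i, Group (G i)]
    {H : Type*} [Group H] (f : ∀ i, G i →* H)
    (hf : ∀ i j (g : G i) (h : G j), Γ.Adj i j → Commute (f i g) (f j h)) :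
    GraphProduct Γ G →* H :=
  QuotientGroup.lift _ (Monoid.CoprodI.lift f) (by
    have hsub : graphProductRels Γ G ⊆ (Monoid.CoprodI.lift f).ker := by
      rintro x ⟨i, j, g, h, hadj, rfl⟩
      have hc := hf i j g h hadj
      rw [SetLike.mem_coe, MonoidHom.mem_ker, map_mul, map_mul, map_mul, map_inv, map_inv,
        Monoid.CoprodI.lift_of, Monoid.CoprodI.lift_of, hc.eq]
      group
    intro x hx
    exact Subgroup.normalClosure_le_normal hsub hx)

theorem GraphProduct.lift_of {ι : Type*} {Γ : SimpleGraph ι} {G : ι → Type*} [∀ i, Group (G i)]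
    {H : Type*} [Group H] (f : ∀ i, G i →* H)
    (hf : ∀ i j (g : G i) (h : G j), Γ.Adj i j → Commute (f i g) (f j h))
    {i : ι} (g : G i) :
    GraphProduct.lift f hf (GraphProduct.of (Γ := Γ) g) = f i g := by
  show QuotientGroup.lift _ (Monoid.CoprodI.lift f) _
      (QuotientGroup.mk (Monoid.CoprodI.of g)) = f i g
  rw [QuotientGroup.lift_mk, Monoid.CoprodI.lift_of]

/-- In a graph product of nontrivial groups, the vertex groups `G u` and `G v` commute
elementwise iff `u = v` with `G u` abelian, or `(u,v)` is an edge of `Γ`. -/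
theorem graphProduct_commute_iff {ι : Type*} (Γ : SimpleGraph ι) (G : ι → Type*)
    [∀ i, Group (G i)] (hnt : ∀ i, Nontrivial (G i)) (u v : ι) :
    (∀ (g : G u) (h : G v),
        Commute (GraphProduct.of (Γ := Γ) g) (GraphProduct.of (Γ := Γ) h)) ↔
      (u = v ∧ ∀ a b : G u, a * b = b * a) ∨ Γ.Adj u v := by
  classical
  constructor
  · intro hcom
    by_cases hAdj : Γ.Adj u v
    · exact Or.inr hAdj
    by_cases huv : u = v
    · subst huv
      refine Or.inl ⟨rfl, fun a b => ?_⟩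
      -- retraction onto G u
      let f : ∀ i, G i →* G u := fun i =>
        if h : i = u then
          { toFun := fun g => h ▸ g
            map_one' := by subst h; rfl
            map_mul' := by subst h; intros; rfl }
        else 1
      have hf : ∀ i j (g : G i) (h : G j), Γ.Adj i j → Commute (f i g) (f j h) := by
        intro i j g h hadj
        have hij : i ≠ j := hadj.ne
        rcases eq_or_ne i u with rfl | hi
        · have : f j = 1 := dif_neg (fun hju => hij hju.symm)
          rw [this]; exact (Commute.one_right _)
        · have : f i = 1 := dif_neg hi
          rw [this]; exact (Commute.one_left _)
      have hfu : ∀ g : G u, f u g = g := by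
        intro g
        simp only [f, dif_pos rfl]
        rfl
      have := congrArg (GraphProduct.lift f hf) (hcom a b)
      simp only [map_mul, GraphProduct.lift_of, hfu] at this
      exact this
    · -- u ≠ v and not adjacent : contradiction with nontriviality
      exfalso
      obtain ⟨g, hg⟩ := exists_ne (1 : G u)
      obtain ⟨h, hh⟩ := exists_ne (1 : G v)
      -- retraction onto the free product of G u and G v
      let s : Type _ := ({u, v} : Set ι)
      let G' : s → Type _ := fun x => G x.1
      let f : ∀ i, G i →* Monoid.CoprodI G' := fun i =>
        if hi : i ∈ ({u, v} : Set ι) then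
          (Monoid.CoprodI.of : G' ⟨i, hi⟩ →* Monoid.CoprodI G')
        else 1
      have hf : ∀ i j (g : G i) (h : G j), Γ.Adj i j → Commute (f i g) (f j h) := by
        intro i j g h hadj
        by_cases hi : i ∈ ({u, v} : Set ι)
        · by_cases hj : j ∈ ({u, v} : Set ι)
          · exfalso
            have hij : i ≠ j := hadj.ne
            rcases hi with rfl | rfl <;> rcases hj with rfl | rfl
            · exact hij rfl
            · exact hAdj hadj
            · exact hAdj hadj.symm
            · exact hij rfl
          · have : f j = 1 := dif_neg hj
            rw [this]; exact Commute.one_right _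
        · have : f i = 1 := dif_neg hi
          rw [this]; exact Commute.one_left _
      have hcgh := congrArg (GraphProduct.lift f hf) (hcom g h)
      have hfu : f u g = Monoid.CoprodI.of (i := (⟨u, Or.inl rfl⟩ : s)) g := by
        simp only [f, dif_pos (show u ∈ ({u, v} : Set ι) from Or.inl rfl)]
      have hfv : f v h = Monoid.CoprodI.of (i := (⟨v, Or.inr rfl⟩ : s)) h := by
        simp only [f, dif_pos (show v ∈ ({u, v} : Set ι) from Or.inr rfl)]
      simp only [map_mul, GraphProduct.lift_of, hfu, hfv] at hcgh
      exact coprodI_not_commute (G := G')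
        (i := (⟨u, Or.inl rfl⟩ : s)) (j := (⟨v, Or.inr rfl⟩ : s))
        (fun hc => huv (congrArg Subtype.val hc)) hg hh hcgh
  · rintro (⟨rfl, hab⟩ | hadj)
    · intro g h
      unfold Commute SemiconjBy
      rw [← map_mul, ← map_mul, hab]
    · intro g h
      unfold Commute SemiconjBy
      show QuotientGroup.mk _ = QuotientGroup.mk _
      rw [QuotientGroup.eq]
      apply Subgroup.subset_normalClosure
      refine ⟨v, u, h⁻¹, g⁻¹, hadj.symm, ?_⟩
      simp only [map_mul, map_inv, inv_inv]
      group
end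

section
/- For a finite simplicial graph Γ with a family of groups G, the subgraph Λ ⊆ Γ generated by a set of vertices yields a subgroup ΛG of ΓG that is finite if and only if Λ is a complete graph all of whose vertex groups are finite. -/
namespace Monoid.CoprodI.NeWord

variable {ι : Type*} {M : ι → Type*} [∀ i, Monoid (M i)]

theorem prod_ne_one {i j : ι} (w : NeWord M i j) : w.prod ≠ 1 := by
  classical
  intro h
  have hw : w.toWord = Word.empty :=
    Word.equiv.symm.injective (by simpa [Word.equiv, Word.prod_empty, prod] using h)
  exact w.toList_ne_nil (congrArg Word.toList hw)

def replicateSucc {i j : ι} (w : NeWord M i j) (hji : j ≠ i) : ℕ → NeWord M i j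
  | 0 => w
  | n + 1 => append w hji (w.replicateSucc hji n)

theorem prod_replicateSucc {i j : ι} (w : NeWord M i j) (hji : j ≠ i) (n : ℕ) :
    (w.replicateSucc hji n).prod = w.prod ^ (n + 1) := by
  induction n with
  | zero => simp [replicateSucc]
  | succ n ih => rw [replicateSucc, append_prod, ih, pow_succ' _ (n + 1)]

theorem not_isOfFinOrder_prod {i j : ι} (w : NeWord M i j) (hij : i ≠ j) :
    ¬IsOfFinOrder w.prod := by
  rw [isOfFinOrder_iff_pow_eq_one]
  rintro ⟨_ | n, hpos, hn⟩
  · exact hpos.false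
  exact (w.replicateSucc hij.symm n).prod_ne_one (by rwa [prod_replicateSucc])

end Monoid.CoprodI.NeWord

theorem Monoid.CoprodI.not_isOfFinOrder_of_mul_of {ι : Type*} {M : ι → Type*}
    [∀ i, Monoid (M i)] {i j : ι} (hij : i ≠ j) {x : M i} {y : M j} (hx : x ≠ 1) (hy : y ≠ 1) :
    ¬IsOfFinOrder (of x * of y) := by
  simpa using (NeWord.append (.singleton x hx) hij (.singleton y hy)).not_isOfFinOrder_prod hij

namespace GraphProduct

variable {ι : Type*} {Γ : SimpleGraph ι} {G : ι → Type*} [∀ i, Group (G i)]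

theorem commute_of_of_adj {i j : ι} (hij : Γ.Adj i j) (g : G i) (h : G j) :
    Commute (of (Γ := Γ) g) (of h) := by
  rw [← commutatorElement_eq_one_iff_commute, commutatorElement_def]
  exact (QuotientGroup.eq_one_iff _).2 (Subgroup.subset_normalClosure ⟨i, j, g, h, hij, rfl⟩)

open scoped Classical in
noncomputable def toCoprodI {T : Set ι} (hT : Γ.IsIndepSet T) :
    GraphProduct Γ G →* Monoid.CoprodI G :=
  QuotientGroup.lift _ (Monoid.CoprodI.lift fun i => if i ∈ T then Monoid.CoprodI.of else 1) <| by
    refine Subgroup.normalClosure_le_normal ?_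
    rintro _ ⟨i, j, g, h, hij, rfl⟩
    by_cases hi : i ∈ T
    · have hj : j ∉ T := fun hj => hT hi hj hij.ne hij
      simp [hi, hj]
    · simp [hi]

theorem toCoprodI_of {T : Set ι} (hT : Γ.IsIndepSet T) {i : ι} (hi : i ∈ T) (g : G i) :
    toCoprodI hT (of g) = Monoid.CoprodI.of g := by
  change QuotientGroup.lift _ _ _ (QuotientGroup.mk (Monoid.CoprodI.of g)) = _
  rw [QuotientGroup.lift_mk, Monoid.CoprodI.lift_of, if_pos hi]

theorem of_injective (i : ι) : Function.Injective (of (Γ := Γ) (G := G) (i := i)) := by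
  have hT : Γ.IsIndepSet {i} := Set.pairwise_singleton _ _
  intro g h hgh
  apply Monoid.CoprodI.of_injective i
  rw [← toCoprodI_of hT rfl, ← toCoprodI_of hT rfl, hgh]

theorem not_isOfFinOrder_of_mul_of {i j : ι} (hij : i ≠ j) (hadj : ¬Γ.Adj i j) {g : G i}
    {h : G j} (hg : g ≠ 1) (hh : h ≠ 1) : ¬IsOfFinOrder (of (Γ := Γ) g * of h) := by
  have hT : Γ.IsIndepSet {i, j} := Set.pairwise_pair.2 fun _ => ⟨hadj, fun h => hadj h.symm⟩
  intro hfin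
  apply Monoid.CoprodI.not_isOfFinOrder_of_mul_of hij hg hh
  simpa [toCoprodI_of hT] using (toCoprodI hT).isOfFinOrder hfin

theorem finite_closure_of_isClique {S : Set ι} [Finite S] (hS : Γ.IsClique S)
    (hfin : ∀ i ∈ S, Finite (G i)) :
    Finite (Subgroup.closure (⋃ i ∈ S, Set.range (of (Γ := Γ) (G := G) (i := i)))) := by
  have : Fintype S := Fintype.ofFinite S
  have : ∀ s : S, Finite (G s) := fun s => hfin s s.2
  have hcomm : Pairwise fun s t : S => ∀ (x : G s) (y : G t), Commute (of (Γ := Γ) x) (of y) :=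
    fun s t hst => commute_of_of_adj (hS s.2 t.2 (Subtype.coe_ne_coe.2 hst))
  have hrange : (MonoidHom.noncommPiCoprod _ hcomm).range =
      Subgroup.closure (⋃ i ∈ S, Set.range (of (Γ := Γ) (G := G) (i := i))) := by
    rw [MonoidHom.noncommPiCoprod_range, Set.biUnion_eq_iUnion, Subgroup.closure_iUnion]
    simp_rw [← MonoidHom.coe_range, Subgroup.closure_eq]
  rw [← hrange]
  exact Finite.of_surjective _ (MonoidHom.rangeRestrict_surjective _)

end GraphProduct

/-- For a finite simplicial graph `Γ` with nontrivial vertex groups, the subgroup of the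
graph product generated by the vertex groups of a full subgraph `Λ` (given by its vertex
set `S`) is finite iff `Λ` is complete and all its vertex groups are finite. -/
theorem graphProduct_subgraph_finite_iff {ι : Type*} [Fintype ι] (Γ : SimpleGraph ι)
    (G : ι → Type*) [∀ i, Group (G i)] (hnt : ∀ i, Nontrivial (G i)) (S : Set ι) :
    Finite (Subgroup.closure
        (⋃ u ∈ S, Set.range (GraphProduct.of (Γ := Γ) (i := u))) : Subgroup (GraphProduct Γ G)) ↔
      ((∀ u ∈ S, ∀ v ∈ S, u ≠ v → Γ.Adj u v) ∧ ∀ u ∈ S, Finite (G u)) := by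
  set C : Subgroup (GraphProduct Γ G) :=
    Subgroup.closure (⋃ u ∈ S, Set.range (GraphProduct.of (Γ := Γ) (i := u)))
  have of_mem : ∀ u ∈ S, ∀ g : G u, GraphProduct.of g ∈ C := fun u hu g =>
    Subgroup.subset_closure (Set.mem_biUnion hu ⟨g, rfl⟩)
  refine ⟨fun hC => ⟨fun u hu v hv huv => ?_, fun u hu => ?_⟩, fun ⟨hS, hfin⟩ => ?_⟩
  · by_contra hadj
    have := hnt u
    have := hnt v
    obtain ⟨g, hg⟩ := exists_ne (1 : G u)
    obtain ⟨h, hh⟩ := exists_ne (1 : G v)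
    exact GraphProduct.not_isOfFinOrder_of_mul_of huv hadj hg hh <| C.subtype.isOfFinOrder <|
      isOfFinOrder_of_finite (⟨_, mul_mem (of_mem u hu g) (of_mem v hv h)⟩ : C)
  · exact Finite.of_injective (fun g : G u => (⟨GraphProduct.of g, of_mem u hu g⟩ : C))
      fun g h hgh => GraphProduct.of_injective u (congrArg Subtype.val hgh)
  · exact GraphProduct.finite_closure_of_isClique hS hfin
end

section
/- Given a family of wallspace structures on the cliques of a graph such that distances decompose: if w = g₁⋯g_n is a minimal-length expression of an element of a graph product ΓG with g_i in vertex group G_i, and each G_i carries a wall pseudo-metric d_i, then the function d(1, g₁⋯g_n) = Σ d_i(1, g_i) (extended equivariantly) defines a G-invariant pseudo-metric on ΓG satisfying the triangle inequality. -/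
/-- The element of the graph product represented by a word: a list of syllables, each a
pair of a vertex and an element of the corresponding vertex group. -/
def wordProd {ι : Type*} (Γ : SimpleGraph ι) (G : ι → Type*) [∀ i, Group (G i)]
    (L : List (Σ i, G i)) : GraphProduct Γ G :=
  (L.map fun p => GraphProduct.of (Γ := Γ) p.2).prod

/-!
Reduced words are unique up to shuffling syllables across edges of `Γ`: the graph product acts
on shuffle classes of reduced words, a letter acting by reducing its product with the word, and
the element of a reduced word sends the empty word to the class of that word. Hence the sum of
the vertex seminorms over the syllables of a reduced word is a function `N` of the group element.
Reducing a word never increases this sum, so concatenating and formally inverting reduced words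
shows that `N` is a group seminorm, and `D x y = N (x⁻¹ * y)` is the pseudometric. A minimal word
is reduced by length-preserving steps, each of which keeps the sum.
-/

namespace GraphProduct

open scoped Classical

variable {ι : Type*} {Γ : SimpleGraph ι} {G : ι → Type*}

variable (Γ G) in
inductive ShuffleStep : List (Σ i, G i) → List (Σ i, G i) → Prop
  | swap (p q : Σ i, G i) (L : List (Σ i, G i)) :
      Γ.Adj p.1 q.1 → ShuffleStep (p :: q :: L) (q :: p :: L)
  | cons (p : Σ i, G i) {L M : List (Σ i, G i)} : ShuffleStep L M → ShuffleStep (p :: L) (p :: M)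

variable (Γ G) in
def Shuffle : List (Σ i, G i) → List (Σ i, G i) → Prop := Relation.EqvGen (ShuffleStep Γ G)

namespace Shuffle

variable {L M N : List (Σ i, G i)}

theorem refl (L : List (Σ i, G i)) : Shuffle Γ G L L := Relation.EqvGen.refl L

theorem symm (h : Shuffle Γ G L M) : Shuffle Γ G M L := Relation.EqvGen.symm _ _ h

theorem trans (h : Shuffle Γ G L M) (h' : Shuffle Γ G M N) : Shuffle Γ G L N :=
  Relation.EqvGen.trans _ _ _ h h'

theorem of_step (h : ShuffleStep Γ G L M) : Shuffle Γ G L M := Relation.EqvGen.rel _ _ h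

theorem swap (p q : Σ i, G i) (L : List (Σ i, G i)) (h : Γ.Adj p.1 q.1) :
    Shuffle Γ G (p :: q :: L) (q :: p :: L) :=
  of_step (.swap p q L h)

theorem le_of_equivalence {r : List (Σ i, G i) → List (Σ i, G i) → Prop} (hr : Equivalence r)
    (hstep : ∀ L M, ShuffleStep Γ G L M → r L M) (h : Shuffle Γ G L M) : r L M :=
  hr.eqvGen_iff.1 (Relation.EqvGen.mono hstep _ _ h)

theorem map {f : List (Σ i, G i) → List (Σ i, G i)}
    (hf : ∀ L M, ShuffleStep Γ G L M → Shuffle Γ G (f L) (f M)) (h : Shuffle Γ G L M) :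
    Shuffle Γ G (f L) (f M) :=
  le_of_equivalence (r := fun L M ↦ Shuffle Γ G (f L) (f M))
    ((Relation.EqvGen.is_equivalence _).comap f) hf h

theorem apply_eq {α : Type*} {f : List (Σ i, G i) → α}
    (hf : ∀ L M, ShuffleStep Γ G L M → f L = f M) (h : Shuffle Γ G L M) : f L = f M :=
  le_of_equivalence (r := fun L M ↦ f L = f M) (eq_equivalence.comap f) hf h

theorem cons (p : Σ i, G i) (h : Shuffle Γ G L M) : Shuffle Γ G (p :: L) (p :: M) :=
  map (fun _ _ h ↦ of_step (.cons p h)) h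

end Shuffle

variable (Γ) in
/-- `CanReach Γ i L`: some syllable of `L` from `G i` can be shuffled to the front. -/
def CanReach (i : ι) : List (Σ i, G i) → Prop
  | [] => False
  | p :: L => p.1 = i ∨ (Γ.Adj p.1 i ∧ CanReach i L)

@[simp] theorem not_canReach_nil (i : ι) : ¬ CanReach Γ i ([] : List (Σ i, G i)) := id

theorem canReach_cons {i : ι} {p : Σ i, G i} {L : List (Σ i, G i)} :
    CanReach Γ i (p :: L) ↔ p.1 = i ∨ (Γ.Adj p.1 i ∧ CanReach Γ i L) := Iff.rfl

variable [∀ i, Group (G i)]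

variable (Γ G) in
/-- The reduced form of `of g * L` for reduced `L`: the letter `g` moves right past syllables
commuting with it and merges with the first syllable of `G i` it meets, vanishing if the
product is `1`; otherwise it stays in front of the first syllable it does not commute with. -/
noncomputable def mulLetter (i : ι) (g : G i) : List (Σ i, G i) → List (Σ i, G i)
  | [] => [⟨i, g⟩]
  | ⟨j, a⟩ :: L =>
    if h : j = i then
      if g * (h ▸ a) = 1 then L else ⟨i, g * (h ▸ a)⟩ :: L
    else if Γ.Adj j i then ⟨j, a⟩ :: mulLetter i g L
    else ⟨i, g⟩ :: ⟨j, a⟩ :: L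

variable (Γ) in
def Reduced : List (Σ i, G i) → Prop
  | [] => True
  | p :: L => p.2 ≠ 1 ∧ ¬ CanReach Γ p.1 L ∧ Reduced L

@[simp] theorem mulLetter_nil (i : ι) (g : G i) : mulLetter Γ G i g [] = [⟨i, g⟩] := rfl

theorem mulLetter_cons_self (i : ι) (g a : G i) (L : List (Σ i, G i)) :
    mulLetter Γ G i g (⟨i, a⟩ :: L) = if g * a = 1 then L else ⟨i, g * a⟩ :: L := by
  simp [mulLetter]

theorem mulLetter_cons_of_adj {i j : ι} (hadj : Γ.Adj j i) (g : G i) (a : G j)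
    (L : List (Σ i, G i)) : mulLetter Γ G i g (⟨j, a⟩ :: L) = ⟨j, a⟩ :: mulLetter Γ G i g L := by
  simp [mulLetter, Γ.ne_of_adj hadj, hadj]

theorem mulLetter_cons_of_not_adj {i j : ι} (hne : j ≠ i) (hadj : ¬ Γ.Adj j i) (g : G i)
    (a : G j) (L : List (Σ i, G i)) :
    mulLetter Γ G i g (⟨j, a⟩ :: L) = ⟨i, g⟩ :: ⟨j, a⟩ :: L := by
  simp [mulLetter, hne, hadj]

theorem mulLetter_shuffle_cons {i : ι} {L : List (Σ i, G i)} (h : ¬ CanReach Γ i L) (g : G i) :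
    Shuffle Γ G (mulLetter Γ G i g L) (⟨i, g⟩ :: L) := by
  induction L with
  | nil => exact .refl _
  | cons p L ih =>
    obtain ⟨j, a⟩ := p
    simp only [canReach_cons, not_or, not_and] at h
    by_cases hadj : Γ.Adj j i
    · rw [mulLetter_cons_of_adj hadj]
      exact ((ih (h.2 hadj)).cons _).trans (.swap ⟨j, a⟩ ⟨i, g⟩ L hadj)
    · rw [mulLetter_cons_of_not_adj h.1 hadj]
      exact .refl _

theorem canReach_of_canReach_mulLetter {i j : ι} (hadj : Γ.Adj j i) (g : G i)
    {L : List (Σ i, G i)} (h : CanReach Γ j (mulLetter Γ G i g L)) : CanReach Γ j L := by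
  have hne : i ≠ j := (Γ.ne_of_adj hadj).symm
  induction L with
  | nil => exact (h.resolve_left hne).2.elim
  | cons p L ih =>
    obtain ⟨k, a⟩ := p
    by_cases hk : k = i
    · subst hk
      rw [mulLetter_cons_self] at h
      split_ifs at h
      · exact .inr ⟨Γ.adj_symm hadj, h⟩
      · exact .inr ⟨Γ.adj_symm hadj, (h.resolve_left hne).2⟩
    by_cases hka : Γ.Adj k i
    · rw [mulLetter_cons_of_adj hka] at h
      exact h.imp_right (And.imp_right ih)
    · rw [mulLetter_cons_of_not_adj hk hka] at h
      exact (h.resolve_left hne).2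

theorem reduced_mulLetter {i : ι} {g : G i} (hg : g ≠ 1) {L : List (Σ i, G i)}
    (hL : Reduced Γ L) : Reduced Γ (mulLetter Γ G i g L) := by
  induction L with
  | nil => exact ⟨hg, not_canReach_nil i, trivial⟩
  | cons p L ih =>
    obtain ⟨k, a⟩ := p
    obtain ⟨ha, hcr, hL⟩ := hL
    by_cases hk : k = i
    · subst hk
      rw [mulLetter_cons_self]
      split_ifs with hc
      · exact hL
      · exact ⟨hc, hcr, hL⟩
    by_cases hka : Γ.Adj k i
    · rw [mulLetter_cons_of_adj hka]
      exact ⟨ha, fun h ↦ hcr (canReach_of_canReach_mulLetter hka g h), ih hL⟩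
    · rw [mulLetter_cons_of_not_adj hk hka]
      exact ⟨hg, by simp [canReach_cons, hk, hka], ha, hcr, hL⟩

theorem mulLetter_swap {i : ι} (g : G i) (p q : Σ i, G i) (L : List (Σ i, G i))
    (hpq : Γ.Adj p.1 q.1) :
    Shuffle Γ G (mulLetter Γ G i g (p :: q :: L)) (mulLetter Γ G i g (q :: p :: L)) := by
  obtain ⟨j, a⟩ := p
  obtain ⟨k, b⟩ := q
  by_cases hj : j = i
  · subst hj
    rw [mulLetter_cons_self, mulLetter_cons_of_adj (Γ.adj_symm hpq), mulLetter_cons_self]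
    split_ifs
    exacts [.refl _, .swap _ _ _ hpq]
  by_cases hk : k = i
  · subst hk
    rw [mulLetter_cons_of_adj hpq, mulLetter_cons_self, mulLetter_cons_self]
    split_ifs
    exacts [.refl _, .swap _ _ _ hpq]
  by_cases hji : Γ.Adj j i <;> by_cases hki : Γ.Adj k i
  · simp only [mulLetter_cons_of_adj hji, mulLetter_cons_of_adj hki]
    exact .swap _ _ _ hpq
  · simp only [mulLetter_cons_of_adj hji, mulLetter_cons_of_not_adj hk hki]
    exact (Shuffle.swap ⟨j, a⟩ ⟨i, g⟩ _ hji).trans ((Shuffle.swap _ _ _ hpq).cons _)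
  · simp only [mulLetter_cons_of_not_adj hj hji, mulLetter_cons_of_adj hki]
    exact ((Shuffle.swap _ _ _ hpq).cons _).trans (.swap ⟨i, g⟩ ⟨k, b⟩ _ (Γ.adj_symm hki))
  · simp only [mulLetter_cons_of_not_adj hj hji, mulLetter_cons_of_not_adj hk hki]
    exact (Shuffle.swap _ _ _ hpq).cons _

theorem Shuffle.mulLetter {i : ι} (g : G i) {L M : List (Σ i, G i)} (h : Shuffle Γ G L M) :
    Shuffle Γ G (mulLetter Γ G i g L) (mulLetter Γ G i g M) := by
  refine Shuffle.map (fun L M h ↦ ?_) h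
  induction h with
  | swap p q L hpq => exact mulLetter_swap g p q L hpq
  | cons p hstep ih =>
    obtain ⟨j, a⟩ := p
    have hLM := Shuffle.of_step hstep
    by_cases hj : j = i
    · subst hj
      simp only [mulLetter_cons_self]
      split_ifs
      exacts [hLM, hLM.cons _]
    by_cases hji : Γ.Adj j i
    · simpa only [mulLetter_cons_of_adj hji] using ih.cons _
    · simpa only [mulLetter_cons_of_not_adj hj hji] using (hLM.cons _).cons _

theorem mulLetter_mulLetter {i : ι} {g g' : G i} (hg : g ≠ 1) (hg' : g' ≠ 1)
    {L : List (Σ i, G i)} (hL : Reduced Γ L) :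
    Shuffle Γ G (mulLetter Γ G i g (mulLetter Γ G i g' L))
      (if g * g' = 1 then L else mulLetter Γ G i (g * g') L) := by
  induction L with
  | nil =>
    rw [mulLetter_nil, mulLetter_cons_self]
    split_ifs <;> exact .refl _
  | cons p L ih =>
    obtain ⟨k, a⟩ := p
    obtain ⟨ha, hcr, hL⟩ := hL
    by_cases hk : k = i
    · subst hk
      rw [mulLetter_cons_self]
      by_cases h1 : g' * a = 1
      · obtain rfl : a = g'⁻¹ := eq_inv_of_mul_eq_one_right h1
        rw [if_pos h1, mulLetter_cons_self, mul_inv_cancel_right, if_neg hg]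
        split_ifs with hc
        · rw [inv_eq_of_mul_eq_one_left hc]
          exact mulLetter_shuffle_cons hcr g
        · exact mulLetter_shuffle_cons hcr g
      · rw [if_neg h1, mulLetter_cons_self, mulLetter_cons_self, ← mul_assoc]
        split_ifs <;> simp_all [Shuffle.refl]
    by_cases hka : Γ.Adj k i
    · simp only [mulLetter_cons_of_adj hka]
      split_ifs at ih ⊢ <;> simpa only [mulLetter_cons_of_adj hka] using (ih hL).cons _
    · simp only [mulLetter_cons_of_not_adj hk hka, mulLetter_cons_self]
      split_ifs <;> exact .refl _

theorem mulLetter_comm {i j : ι} (hij : Γ.Adj i j) (g : G i) (h : G j) (L : List (Σ i, G i)) :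
    Shuffle Γ G (mulLetter Γ G i g (mulLetter Γ G j h L))
      (mulLetter Γ G j h (mulLetter Γ G i g L)) := by
  have hji := Γ.adj_symm hij
  induction L with
  | nil =>
    simp only [mulLetter_nil, mulLetter_cons_of_adj hij, mulLetter_cons_of_adj hji]
    exact .swap ⟨j, h⟩ ⟨i, g⟩ [] hji
  | cons p L ih =>
    obtain ⟨k, a⟩ := p
    by_cases hkj : k = j
    · subst hkj
      simp only [mulLetter_cons_self, mulLetter_cons_of_adj hji]
      split_ifs <;> simp only [mulLetter_cons_of_adj hji, Shuffle.refl]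
    by_cases hki : k = i
    · subst hki
      simp only [mulLetter_cons_self, mulLetter_cons_of_adj hij]
      split_ifs <;> simp only [mulLetter_cons_of_adj hij, Shuffle.refl]
    by_cases hkj' : Γ.Adj k j <;> by_cases hki' : Γ.Adj k i
    · simp only [mulLetter_cons_of_adj hkj', mulLetter_cons_of_adj hki']
      exact ih.cons _
    · simp only [mulLetter_cons_of_adj hkj', mulLetter_cons_of_not_adj hki hki',
        mulLetter_cons_of_adj hij]
      exact .refl _
    · simp only [mulLetter_cons_of_not_adj hkj hkj', mulLetter_cons_of_adj hki',
        mulLetter_cons_of_adj hji]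
      exact .refl _
    · simp only [mulLetter_cons_of_not_adj hkj hkj', mulLetter_cons_of_not_adj hki hki',
        mulLetter_cons_of_adj hij, mulLetter_cons_of_adj hji]
      exact .swap ⟨j, h⟩ ⟨i, g⟩ _ hji

theorem of_commute_of_adj {i j : ι} (hij : Γ.Adj i j) (g : G i) (h : G j) :
    Commute (of (Γ := Γ) g) (of (Γ := Γ) h) := by
  rw [← commutatorElement_eq_one_iff_commute, commutatorElement_def]
  exact (QuotientGroup.eq_one_iff _).2 (Subgroup.subset_normalClosure ⟨i, j, g, h, hij, rfl⟩)

@[simp] theorem wordProd_nil : wordProd Γ G [] = 1 := rfl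

theorem wordProd_cons (p : Σ i, G i) (L : List (Σ i, G i)) :
    wordProd Γ G (p :: L) = of p.2 * wordProd Γ G L := by
  simp [wordProd]

theorem wordProd_append (L M : List (Σ i, G i)) :
    wordProd Γ G (L ++ M) = wordProd Γ G L * wordProd Γ G M := by
  simp [wordProd]

theorem wordProd_surjective : Function.Surjective (wordProd Γ G) := by
  intro w
  obtain ⟨x, rfl⟩ := QuotientGroup.mk'_surjective _ w
  induction x using Monoid.CoprodI.induction_on with
  | one => exact ⟨[], rfl⟩
  | of i g => exact ⟨[⟨i, g⟩], by simp [wordProd]; rfl⟩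
  | mul x y hx hy =>
    obtain ⟨Lx, hLx⟩ := hx
    obtain ⟨Ly, hLy⟩ := hy
    exact ⟨Lx ++ Ly, by rw [wordProd_append, hLx, hLy, map_mul]; rfl⟩

theorem Shuffle.wordProd_eq {L M : List (Σ i, G i)} (h : Shuffle Γ G L M) :
    wordProd Γ G L = wordProd Γ G M := by
  refine Shuffle.apply_eq (fun L M h ↦ ?_) h
  induction h with
  | swap p q L hpq =>
    simp only [wordProd_cons, ← mul_assoc, (of_commute_of_adj hpq p.2 q.2).eq]
  | cons p _ ih => rw [wordProd_cons, wordProd_cons, ih]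

theorem wordProd_mulLetter (i : ι) (g : G i) (L : List (Σ i, G i)) :
    wordProd Γ G (mulLetter Γ G i g L) = of g * wordProd Γ G L := by
  induction L with
  | nil => simp [wordProd]
  | cons p L ih =>
    obtain ⟨k, a⟩ := p
    by_cases hk : k = i
    · subst hk
      rw [mulLetter_cons_self]
      split_ifs with hc
      · rw [wordProd_cons, ← mul_assoc, ← map_mul, hc, map_one, one_mul]
      · simp only [wordProd_cons, map_mul, mul_assoc]
    by_cases hka : Γ.Adj k i
    · rw [mulLetter_cons_of_adj hka, wordProd_cons, wordProd_cons, ih, ← mul_assoc, ← mul_assoc,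
        (of_commute_of_adj hka a g).eq]
    · rw [mulLetter_cons_of_not_adj hk hka, wordProd_cons, wordProd_cons]

variable (Γ G) in
def reducedSetoid : Setoid {L : List (Σ i, G i) // Reduced Γ L} where
  r L M := Shuffle Γ G L.1 M.1
  iseqv := ⟨fun _ ↦ .refl _, Shuffle.symm, Shuffle.trans⟩

variable (Γ G) in
abbrev ReducedClass : Type _ := Quotient (reducedSetoid Γ G)

variable (Γ G) in
noncomputable def letterAct (i : ι) (g : G i) : ReducedClass Γ G → ReducedClass Γ G :=
  Quotient.map
    (fun L ↦ if hg : g = 1 then L else ⟨mulLetter Γ G i g L.1, reduced_mulLetter hg L.2⟩)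
    fun L M h ↦ by
      by_cases hg : g = 1
      · simpa [hg] using h
      · simp only [dif_neg hg]
        exact h.mulLetter g

theorem letterAct_one (i : ι) : letterAct Γ G i 1 = id := by
  funext x
  induction x using Quotient.inductionOn
  simp [letterAct]

theorem letterAct_mul (i : ι) (g g' : G i) :
    letterAct Γ G i (g * g') = letterAct Γ G i g ∘ letterAct Γ G i g' := by
  funext x
  induction x using Quotient.inductionOn with | h L => ?_
  by_cases hg' : g' = 1
  · simp [hg', letterAct_one]
  by_cases hg : g = 1
  · simp [hg, letterAct_one]
  simp only [letterAct, Function.comp_apply, Quotient.map_mk, dif_neg hg, dif_neg hg']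
  refine Quotient.sound (Shuffle.symm ?_)
  have := mulLetter_mulLetter hg hg' L.2
  split_ifs at this ⊢ <;> exact this

variable (Γ G) in
noncomputable def vertexPerm (i : ι) : G i →* Equiv.Perm (ReducedClass Γ G) :=
  Equiv.Perm.equivUnitsEnd.symm.toMonoidHom.comp
    (MonoidHom.toHomUnits ⟨⟨letterAct Γ G i, letterAct_one i⟩, letterAct_mul i⟩)

theorem vertexPerm_apply (i : ι) (g : G i) (x : ReducedClass Γ G) :
    vertexPerm Γ G i g x = letterAct Γ G i g x := rfl

theorem letterAct_comm {i j : ι} (hij : Γ.Adj i j) (g : G i) (h : G j) :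
    Function.Commute (letterAct Γ G i g) (letterAct Γ G j h) := by
  intro x
  induction x using Quotient.inductionOn with | h L => ?_
  by_cases hg : g = 1
  · simp [hg, letterAct_one]
  by_cases hh : h = 1
  · simp [hh, letterAct_one]
  simp only [letterAct, Quotient.map_mk, dif_neg hg, dif_neg hh]
  exact Quotient.sound (mulLetter_comm hij g h L.1)

variable (Γ G) in
noncomputable def permRep : GraphProduct Γ G →* Equiv.Perm (ReducedClass Γ G) :=
  QuotientGroup.lift _ (Monoid.CoprodI.lift (vertexPerm Γ G)) fun x hx ↦ by
    refine Subgroup.normalClosure_le_normal (N := (Monoid.CoprodI.lift (vertexPerm Γ G)).ker)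
      ?_ hx
    rintro _ ⟨i, j, g, h, hij, rfl⟩
    have hcomm : Commute (vertexPerm Γ G i g) (vertexPerm Γ G j h) := by
      ext x
      exact letterAct_comm hij g h x
    simp [hcomm.eq]

theorem permRep_of {i : ι} (g : G i) : permRep Γ G (of g) = vertexPerm Γ G i g :=
  Monoid.CoprodI.lift_of (vertexPerm Γ G) g

theorem permRep_wordProd {L : List (Σ i, G i)} (hL : Reduced Γ L) :
    permRep Γ G (wordProd Γ G L) ⟦⟨[], trivial⟩⟧ = ⟦⟨L, hL⟩⟧ := by
  induction L with
  | nil => rfl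
  | cons p L ih =>
    obtain ⟨hp, hcr, hL'⟩ := hL
    rw [wordProd_cons, map_mul, Equiv.Perm.mul_apply, ih hL', permRep_of, vertexPerm_apply]
    simp only [letterAct, Quotient.map_mk, dif_neg hp]
    exact Quotient.sound (mulLetter_shuffle_cons hcr p.2)

theorem shuffle_of_wordProd_eq {L M : List (Σ i, G i)} (hL : Reduced Γ L) (hM : Reduced Γ M)
    (h : wordProd Γ G L = wordProd Γ G M) : Shuffle Γ G L M :=
  Quotient.exact ((permRep_wordProd hL).symm.trans (h ▸ permRep_wordProd hM))

theorem length_mulLetter_le (i : ι) (g : G i) (L : List (Σ i, G i)) :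
    (mulLetter Γ G i g L).length ≤ L.length + 1 := by
  induction L with
  | nil => simp
  | cons p L ih =>
    obtain ⟨k, a⟩ := p
    by_cases hk : k = i
    · subst hk
      rw [mulLetter_cons_self]
      split_ifs <;> simp
      omega
    by_cases hka : Γ.Adj k i
    · simpa [mulLetter_cons_of_adj hka] using ih
    · simp [mulLetter_cons_of_not_adj hk hka]

variable (Γ G) in
noncomputable def normalForm : List (Σ i, G i) → List (Σ i, G i)
  | [] => []
  | p :: L => if p.2 = 1 then normalForm L else mulLetter Γ G p.1 p.2 (normalForm L)

theorem reduced_normalForm (L : List (Σ i, G i)) : Reduced Γ (normalForm Γ G L) := by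
  induction L with
  | nil => trivial
  | cons p L ih =>
    rw [normalForm]
    split_ifs with hp
    exacts [ih, reduced_mulLetter hp ih]

theorem wordProd_normalForm (L : List (Σ i, G i)) :
    wordProd Γ G (normalForm Γ G L) = wordProd Γ G L := by
  induction L with
  | nil => rfl
  | cons p L ih =>
    rw [normalForm, wordProd_cons]
    split_ifs with hp
    · rw [hp, map_one, one_mul, ih]
    · rw [wordProd_mulLetter, ih]

theorem length_normalForm_le (L : List (Σ i, G i)) :
    (normalForm Γ G L).length ≤ L.length := by
  induction L with
  | nil => rfl
  | cons p L ih =>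
    rw [normalForm, List.length_cons]
    split_ifs
    · omega
    · exact (length_mulLetter_le _ _ _).trans (by omega)

def invWord (L : List (Σ i, G i)) : List (Σ i, G i) :=
  (L.map fun p ↦ ⟨p.1, p.2⁻¹⟩).reverse

theorem invWord_cons (p : Σ i, G i) (L : List (Σ i, G i)) :
    invWord (p :: L) = invWord L ++ [⟨p.1, p.2⁻¹⟩] := by
  simp [invWord]

theorem wordProd_invWord (L : List (Σ i, G i)) :
    wordProd Γ G (invWord L) = (wordProd Γ G L)⁻¹ := by
  induction L with
  | nil => rfl
  | cons p L ih =>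
    rw [invWord_cons, wordProd_append, ih, wordProd_cons, wordProd_nil, mul_one, wordProd_cons,
      mul_inv_rev, map_inv]

variable (Γ G) in
noncomputable def reducedWord (w : GraphProduct Γ G) : List (Σ i, G i) :=
  normalForm Γ G (wordProd_surjective w).choose

theorem reduced_reducedWord (w : GraphProduct Γ G) : Reduced Γ (reducedWord Γ G w) :=
  reduced_normalForm _

theorem wordProd_reducedWord (w : GraphProduct Γ G) : wordProd Γ G (reducedWord Γ G w) = w :=
  (wordProd_normalForm _).trans (wordProd_surjective w).choose_spec

section Seminorm

variable (N : ∀ i, GroupSeminorm (G i))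

def wordNorm (L : List (Σ i, G i)) : ℝ := (L.map fun p ↦ N p.1 p.2).sum

@[simp] theorem wordNorm_nil : wordNorm N ([] : List (Σ i, G i)) = 0 := rfl

@[simp] theorem wordNorm_cons (p : Σ i, G i) (L : List (Σ i, G i)) :
    wordNorm N (p :: L) = N p.1 p.2 + wordNorm N L := by
  simp [wordNorm]

@[simp] theorem wordNorm_append (L M : List (Σ i, G i)) :
    wordNorm N (L ++ M) = wordNorm N L + wordNorm N M := by
  simp [wordNorm]

theorem Shuffle.wordNorm_eq {L M : List (Σ i, G i)} (h : Shuffle Γ G L M) :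
    wordNorm N L = wordNorm N M := by
  refine Shuffle.apply_eq (fun L M h ↦ ?_) h
  induction h with
  | swap => simp only [wordNorm_cons]; ring
  | cons p _ ih => rw [wordNorm_cons, wordNorm_cons, ih]

theorem wordNorm_mulLetter_le (i : ι) (g : G i) (L : List (Σ i, G i)) :
    wordNorm N (mulLetter Γ G i g L) ≤ N i g + wordNorm N L := by
  induction L with
  | nil => simp
  | cons p L ih =>
    obtain ⟨k, a⟩ := p
    by_cases hk : k = i
    · subst hk
      rw [mulLetter_cons_self]
      split_ifs
      · simp only [wordNorm_cons]
        linarith [apply_nonneg (N k) g, apply_nonneg (N k) a]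
      · simp only [wordNorm_cons]
        linarith [map_mul_le_add (N k) g a]
    by_cases hka : Γ.Adj k i
    · simp only [mulLetter_cons_of_adj hka, wordNorm_cons]
      linarith
    · simp [mulLetter_cons_of_not_adj hk hka]

theorem wordNorm_mulLetter_of_length {i : ι} (g : G i) {L : List (Σ i, G i)}
    (hlen : (mulLetter Γ G i g L).length = L.length + 1) :
    wordNorm N (mulLetter Γ G i g L) = N i g + wordNorm N L := by
  induction L with
  | nil => simp
  | cons p L ih =>
    obtain ⟨k, a⟩ := p
    by_cases hk : k = i
    · subst hk
      rw [mulLetter_cons_self] at hlen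
      split_ifs at hlen <;> simp at hlen
      omega
    by_cases hka : Γ.Adj k i
    · simp only [mulLetter_cons_of_adj hka, List.length_cons] at hlen ⊢
      rw [wordNorm_cons, wordNorm_cons, ih (by omega)]
      ring
    · simp [mulLetter_cons_of_not_adj hk hka]

theorem wordNorm_normalForm_le (L : List (Σ i, G i)) :
    wordNorm N (normalForm Γ G L) ≤ wordNorm N L := by
  induction L with
  | nil => rfl
  | cons p L ih =>
    rw [normalForm, wordNorm_cons]
    split_ifs with hp
    · rw [hp, map_one_eq_zero, zero_add]
      exact ih
    · linarith [wordNorm_mulLetter_le (Γ := Γ) N p.1 p.2 (normalForm Γ G L)]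

theorem wordNorm_normalForm_of_length {L : List (Σ i, G i)}
    (hlen : (normalForm Γ G L).length = L.length) :
    wordNorm N (normalForm Γ G L) = wordNorm N L := by
  induction L with
  | nil => rfl
  | cons p L ih =>
    have hle := length_normalForm_le (Γ := Γ) L
    rw [normalForm] at hlen ⊢
    split_ifs at hlen ⊢ with hp
    · simp at hlen
      omega
    · have hmul := length_mulLetter_le (Γ := Γ) p.1 p.2 (normalForm Γ G L)
      simp only [List.length_cons] at hlen
      rw [wordNorm_cons, wordNorm_mulLetter_of_length N p.2 (by omega), ih (by omega)]

theorem wordNorm_invWord (L : List (Σ i, G i)) :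
    wordNorm N (invWord L) = wordNorm N L := by
  induction L with
  | nil => rfl
  | cons p L ih =>
    rw [invWord_cons, wordNorm_append, ih, wordNorm_cons, wordNorm_cons, wordNorm_nil,
      map_inv_eq_map, add_zero, add_comm]

theorem wordNorm_reducedWord_wordProd (L : List (Σ i, G i)) :
    wordNorm N (reducedWord Γ G (wordProd Γ G L)) = wordNorm N (normalForm Γ G L) :=
  (shuffle_of_wordProd_eq (reduced_reducedWord _) (reduced_normalForm L)
    (by rw [wordProd_reducedWord, wordProd_normalForm])).wordNorm_eq N

theorem wordNorm_reducedWord_wordProd_le (L : List (Σ i, G i)) :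
    wordNorm N (reducedWord Γ G (wordProd Γ G L)) ≤ wordNorm N L :=
  (wordNorm_reducedWord_wordProd N L).trans_le (wordNorm_normalForm_le N L)

variable (Γ) in
noncomputable def graphSeminorm : GroupSeminorm (GraphProduct Γ G) where
  toFun w := wordNorm N (reducedWord Γ G w)
  map_one' := by simpa [normalForm] using wordNorm_reducedWord_wordProd (Γ := Γ) N []
  mul_le' x y := by
    simpa [wordProd_append, wordProd_reducedWord] using
      wordNorm_reducedWord_wordProd_le (Γ := Γ) N (reducedWord Γ G x ++ reducedWord Γ G y)
  inv' x := by
    have inv_le (x : GraphProduct Γ G) :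
        wordNorm N (reducedWord Γ G x⁻¹) ≤ wordNorm N (reducedWord Γ G x) := by
      simpa [wordProd_invWord, wordProd_reducedWord, wordNorm_invWord] using
        wordNorm_reducedWord_wordProd_le (Γ := Γ) N (invWord (reducedWord Γ G x))
    exact (inv_le x).antisymm (by simpa using inv_le x⁻¹)

theorem graphSeminorm_wordProd_of_minimal {L : List (Σ i, G i)}
    (hmin : ∀ L', wordProd Γ G L' = wordProd Γ G L → L.length ≤ L'.length) :
    graphSeminorm Γ N (wordProd Γ G L) = wordNorm N L := by
  have hlen : (normalForm Γ G L).length = L.length :=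
    (length_normalForm_le L).antisymm (hmin _ (wordProd_normalForm L))
  exact (wordNorm_reducedWord_wordProd N L).trans (wordNorm_normalForm_of_length N hlen)

end Seminorm

end GraphProduct

def GroupSeminorm.ofLeftInvariantDist {H : Type*} [Group H] (d : H → H → ℝ)
    (hd0 : ∀ g, d g g = 0) (hdsymm : ∀ g h, d g h = d h g)
    (hdtri : ∀ a b c, d a c ≤ d a b + d b c) (hdinv : ∀ k a b, d (k * a) (k * b) = d a b) :
    GroupSeminorm H where
  toFun g := d 1 g
  map_one' := hd0 1
  mul_le' g h := (hdtri 1 g (g * h)).trans_eq (by rw [← hdinv g 1 h, mul_one])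
  inv' g := by rw [← hdinv g, mul_one, mul_inv_cancel, hdsymm]

theorem graphProduct_wall_pseudometric_general {ι : Type*} (Γ : SimpleGraph ι)
    (G : ι → Type*) [∀ i, Group (G i)] (d : ∀ i, G i → G i → ℝ)
    (hd0 : ∀ i (g : G i), d i g g = 0)
    (hdsymm : ∀ i (g h : G i), d i g h = d i h g)
    (hdtri : ∀ i (a b c : G i), d i a c ≤ d i a b + d i b c)
    (hdinv : ∀ i (k a b : G i), d i (k * a) (k * b) = d i a b) :
    ∃ D : GraphProduct Γ G → GraphProduct Γ G → ℝ,
      (∀ x, D x x = 0) ∧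
      (∀ x y, D x y = D y x) ∧
      (∀ x y z, D x z ≤ D x y + D y z) ∧
      (∀ g x y, D (g * x) (g * y) = D x y) ∧
      (∀ L : List (Σ i, G i),
        (∀ L' : List (Σ i, G i), wordProd Γ G L' = wordProd Γ G L → L.length ≤ L'.length) →
        D 1 (wordProd Γ G L) = (L.map fun p => d p.1 1 p.2).sum) := by
  let N := GraphProduct.graphSeminorm Γ fun i ↦
    GroupSeminorm.ofLeftInvariantDist (d i) (hd0 i) (hdsymm i) (hdtri i) (hdinv i)
  refine ⟨fun x y ↦ N (x⁻¹ * y), fun x ↦ ?_, fun x y ↦ ?_, fun x y z ↦ ?_, fun g x y ↦ ?_,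
    fun L hmin ↦ ?_⟩
  · simp
  · dsimp only
    rw [← map_inv_eq_map N, mul_inv_rev, inv_inv]
  · simpa [mul_assoc] using map_mul_le_add N (x⁻¹ * y) (y⁻¹ * z)
  · simp [mul_assoc]
  · show N (1⁻¹ * _) = _
    rw [inv_one, one_mul]
    exact GraphProduct.graphSeminorm_wordProd_of_minimal _ hmin

/-- Given left-invariant pseudo-metrics `d i` on the vertex groups of a graph product
over a finite graph, there is a left-invariant pseudo-metric `D` on the graph product
such that for every minimal-length word `g₁ ⋯ g_n` one has `D(1, g₁⋯g_n) = Σ dᵢ(1,gᵢ)`. -/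
theorem graphProduct_wall_pseudometric {ι : Type*} [Fintype ι] (Γ : SimpleGraph ι)
    (G : ι → Type*) [∀ i, Group (G i)] (d : ∀ i, G i → G i → ℝ)
    (hd0 : ∀ i (g : G i), d i g g = 0)
    (hdsymm : ∀ i (g h : G i), d i g h = d i h g)
    (hdtri : ∀ i (a b c : G i), d i a c ≤ d i a b + d i b c)
    (hdinv : ∀ i (k a b : G i), d i (k * a) (k * b) = d i a b) :
    ∃ D : GraphProduct Γ G → GraphProduct Γ G → ℝ,
      (∀ x, D x x = 0) ∧
      (∀ x y, D x y = D y x) ∧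
      (∀ x y z, D x z ≤ D x y + D y z) ∧
      (∀ g x y, D (g * x) (g * y) = D x y) ∧
      (∀ L : List (Σ i, G i),
        (∀ L' : List (Σ i, G i), wordProd Γ G L' = wordProd Γ G L → L.length ≤ L'.length) →
        D 1 (wordProd Γ G L) = (L.map fun p => d p.1 1 p.2).sum) :=
  graphProduct_wall_pseudometric_general Γ G d hd0 hdsymm hdtri hdinv
end

section
/- A Hamming graph, i.e., a finite product of complete graphs K_{n₁} × ⋯ × K_{n_k} (with the Cartesian product adjacency), contains no induced subgraph isomorphic to K₄ minus an edge and no induced K_{3,2}. -/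
/-- The Hamming graph: the Cartesian product of the complete graphs `K_{n i}`; two tuples
are adjacent iff they differ in exactly one coordinate. -/
def hammingGraph (k : ℕ) (n : Fin k → ℕ) : SimpleGraph (∀ i, Fin (n i)) where
  Adj x y := ∃! i, x i ≠ y i
  symm := by
    constructor
    rintro x y ⟨i, hi, hu⟩
    exact ⟨i, hi.symm, fun j hj => hu j hj.symm⟩
  loopless := by
    constructor
    rintro x ⟨i, hi, -⟩
    exact hi rfl

/-!
Two adjacent vertices of a Hamming graph differ in a single coordinate `i`, and every common
neighbour of them differs from both in that same coordinate only, so the common neighbours of an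
adjacent pair form a clique; in `K₄⁻` the two vertices of degree two are non-adjacent common
neighbours of an edge. Two distinct non-adjacent vertices with a common neighbour differ in exactly
two coordinates `i`, `j`, and a common neighbour is obtained from one of them by copying the other
in coordinate `i` or in coordinate `j`; so they have at most two common neighbours, whereas the two
vertices of the small side of `K_{3,2}` have three.
-/

open SimpleGraph Function

namespace hammingGraph

variable {k : ℕ} {n : Fin k → ℕ} {x y z : ∀ i, Fin (n i)}

theorem adj_iff : (hammingGraph k n).Adj x y ↔ ∃ i, x i ≠ y i ∧ ∀ j ≠ i, x j = y j :=
  exists_congr fun _ => and_congr_right fun _ => forall_congr' fun _ => not_imp_comm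

theorem adj_of_ne_of_forall_ne {i : Fin k} (hne : x ≠ y) (h : ∀ j ≠ i, x j = y j) :
    (hammingGraph k n).Adj x y := by
  refine adj_iff.mpr ⟨i, fun hi => hne (funext fun j => ?_), h⟩
  by_cases hj : j = i
  · exact hj ▸ hi
  · exact h j hj

theorem apply_eq_of_mem_commonNeighbors {i : Fin k} (hi : x i ≠ y i) (hxy : ∀ j ≠ i, x j = y j)
    (hz : z ∈ (hammingGraph k n).commonNeighbors x y) : ∀ j ≠ i, z j = x j := by
  obtain ⟨i', hxz, hxz'⟩ := adj_iff.mp hz.1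
  have hii' : i' = i := by
    by_contra hne
    exact hne (ExistsUnique.unique hz.2 (hxy i' hne ▸ hxz)
      fun h => hi ((hxz' i (Ne.symm hne)).trans h.symm))
  exact fun j hj => (hxz' j (hii' ▸ hj)).symm

theorem isClique_commonNeighbors (h : (hammingGraph k n).Adj x y) :
    (hammingGraph k n).IsClique ((hammingGraph k n).commonNeighbors x y) := by
  obtain ⟨i, hi, hxy⟩ := adj_iff.mp h
  intro z hz w hw hne
  exact adj_of_ne_of_forall_ne hne fun j hj =>
    (apply_eq_of_mem_commonNeighbors hi hxy hz j hj).trans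
      (apply_eq_of_mem_commonNeighbors hi hxy hw j hj).symm

theorem exists_eq_update_of_mem_commonNeighbors (hne : x ≠ y)
    (hna : ¬(hammingGraph k n).Adj x y) (hz : z ∈ (hammingGraph k n).commonNeighbors x y) :
    ∃ i j, (∀ l, x l ≠ y l ↔ l = i ∨ l = j) ∧ z = update x i (y i) := by
  obtain ⟨i, hxi, hx⟩ := adj_iff.mp hz.1
  obtain ⟨j, hyj, hy⟩ := adj_iff.mp hz.2
  have hij : i ≠ j := by
    rintro rfl
    exact hna (adj_of_ne_of_forall_ne hne fun l hl => (hx l hl).trans (hy l hl).symm)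
  have hzi : z i = y i := (hy i hij).symm
  have hzj : z j = x j := (hx j hij.symm).symm
  refine ⟨i, j, fun l => ⟨fun hl => ?_, ?_⟩, funext fun l => ?_⟩
  · by_contra! h
    exact hl ((hx l h.1).trans (hy l h.2).symm)
  · rintro (rfl | rfl)
    · exact hzi ▸ hxi
    · exact hzj ▸ hyj.symm
  · by_cases hl : l = i
    · subst hl; simpa using hzi
    · simpa [hl] using (hx l hl).symm

theorem ncard_commonNeighbors_le_two (hne : x ≠ y) (hna : ¬(hammingGraph k n).Adj x y) :
    ((hammingGraph k n).commonNeighbors x y).ncard ≤ 2 := by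
  obtain hempty | ⟨z, hz⟩ := ((hammingGraph k n).commonNeighbors x y).eq_empty_or_nonempty
  · simp [hempty]
  obtain ⟨i, j, hdiff, -⟩ := exists_eq_update_of_mem_commonNeighbors hne hna hz
  have hsub : (hammingGraph k n).commonNeighbors x y ⊆ {update x i (y i), update x j (y j)} := by
    intro w hw
    obtain ⟨i', j', hdiff', rfl⟩ := exists_eq_update_of_mem_commonNeighbors hne hna hw
    rcases (hdiff i').mp ((hdiff' i').mpr (Or.inl rfl)) with rfl | rfl <;> simp
  calc _ ≤ ({update x i (y i), update x j (y j)} : Set _).ncard := Set.ncard_le_ncard hsub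
    _ ≤ ({update x j (y j)} : Set _).ncard + 1 := Set.ncard_insert_le _ _
    _ = 2 := by rw [Set.ncard_singleton]

end hammingGraph

/-- A Hamming graph (finite product of complete graphs) contains no induced `K₄⁻` and
no induced `K_{3,2}`. -/
theorem hammingGraph_no_K4minus_no_K32 (k : ℕ) (n : Fin k → ℕ) :
    IsEmpty (K4minus ↪g hammingGraph k n) ∧
    IsEmpty (completeBipartiteGraph (Fin 3) (Fin 2) ↪g hammingGraph k n) := by
  refine ⟨⟨fun f => ?_⟩, ⟨fun f => ?_⟩⟩
  · have hadj : ∀ a b : Fin 4, K4minus.Adj a b → (hammingGraph k n).Adj (f a) (f b) :=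
      fun _ _ => f.map_adj_iff.mpr
    have h23 := hammingGraph.isClique_commonNeighbors (hadj 0 1 (by simp [K4minus]))
      ⟨hadj 0 2 (by simp [K4minus]), hadj 1 2 (by simp [K4minus])⟩
      ⟨hadj 0 3 (by simp [K4minus]), hadj 1 3 (by simp [K4minus])⟩ (f.injective.ne (by decide))
    exact absurd (f.map_adj_iff.mp h23) (by simp [K4minus])
  · have hsub : Set.range (f ∘ Sum.inl) ⊆
        (hammingGraph k n).commonNeighbors (f (Sum.inr 0)) (f (Sum.inr 1)) := by
      rintro _ ⟨a, rfl⟩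
      exact ⟨f.map_adj_iff.mpr (by simp), f.map_adj_iff.mpr (by simp)⟩
    have h3 := Set.ncard_le_ncard hsub
    rw [Set.ncard_range_of_injective (f.injective.comp Sum.inl_injective), Nat.card_fin] at h3
    have h2 := hammingGraph.ncard_commonNeighbors_le_two
      (f.injective.ne (Sum.inr_injective.ne (by decide : (0 : Fin 2) ≠ 1)))
      (fun h => by simpa using f.map_adj_iff.mp h)
    omega
end
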